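/- arXiv:1902.09050 — 6 statements merged into one kernel-verified Lean document; each statement's English description precedes it below -/
import Mathlib

section
/- Let 𝒦 be a collection of compact subsets of ℂ^N totally ordered by inclusion, and let K_∞ = ⋂_{K∈𝒦} K. Then the rational hull of K_∞ equals ⋂_{K∈𝒦} (rational hull of K). -/
open MvPolynomial

noncomputable def polyHull {N : ℕ} (K : Set (Fin N → ℂ)) : Set (Fin N → ℂ) :=
  {z | ∀ p : MvPolynomial (Fin N) ℂ,
    ‖eval z p‖ ≤ sSup ((fun x => ‖eval x p‖) '' K)}

def IsPolyConvex {N : ℕ} (K : Set (Fin N → ℂ)) : Prop := polyHull K = K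

def rationalHull {N : ℕ} (K : Set (Fin N → ℂ)) : Set (Fin N → ℂ) :=
  {z | ∀ p : MvPolynomial (Fin N) ℂ, eval z p = 0 → ∃ x ∈ K, eval x p = 0}

noncomputable def polyHull1 (S : Set ℂ) : Set ℂ :=
  {w | ∀ p : Polynomial ℂ, ‖p.eval w‖ ≤ sSup ((fun s => ‖p.eval s‖) '' S)}

noncomputable def PX {N : ℕ} (X : Set (Fin N → ℂ)) : Set C(X, ℂ) :=
  closure {f : C(X, ℂ) | ∃ p : MvPolynomial (Fin N) ℂ,
    ∀ x : X, f x = eval (x : Fin N → ℂ) p}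

def SameGleasonPart {N : ℕ} (H : Set (Fin N → ℂ)) (x y : Fin N → ℂ) : Prop :=
  ∃ c ≥ (1 : ℝ), ∀ p : MvPolynomial (Fin N) ℂ,
    (∀ z ∈ H, (eval z p).re ≤ 0) →
    c * (eval y p).re ≤ (eval x p).re ∧ c * (eval x p).re ≤ (eval y p).re

/-! If a polynomial vanishing at `z` has a zero on every `K ∈ 𝒦`, its zero sets in the members
of the chain form a chain of nonempty compacta, so by Cantor's intersection theorem it has a
zero on `⋂₀ 𝒦`. -/

open Set

theorem IsChain.nonempty_sInter_inter_of_isClosed {X : Type*} [TopologicalSpace X] [T2Space X]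
    {𝒦 : Set (Set X)} (hcomp : ∀ K ∈ 𝒦, IsCompact K) (hchain : IsChain (· ⊆ ·) 𝒦)
    {Z : Set X} (hZ : IsClosed Z) (hZne : Z.Nonempty) (hmeet : ∀ K ∈ 𝒦, (K ∩ Z).Nonempty) :
    (⋂₀ 𝒦 ∩ Z).Nonempty := by
  rcases 𝒦.eq_empty_or_nonempty with rfl | hne
  · simpa using hZne
  have : Nonempty 𝒦 := hne.to_subtype
  have hdir : Directed (· ⊇ ·) fun K : 𝒦 => (K : Set X) ∩ Z :=
    fun K L => (hchain.total K.2 L.2).elim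
      (fun h => ⟨K, subset_rfl, inter_subset_inter_left Z h⟩)
      (fun h => ⟨L, inter_subset_inter_left Z h, subset_rfl⟩)
  rw [sInter_eq_iInter, iInter_inter]
  exact IsCompact.nonempty_iInter_of_directed_nonempty_isCompact_isClosed _ hdir
    (fun K => hmeet K K.2) (fun K => (hcomp K K.2).inter_right hZ)
    (fun K => (hcomp K K.2).isClosed.inter hZ)

theorem rationalHull_mono {N : ℕ} {K L : Set (Fin N → ℂ)} (hKL : K ⊆ L) :
    rationalHull K ⊆ rationalHull L := fun _ hz p hp =>
  let ⟨x, hxK, hxp⟩ := hz p hp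
  ⟨x, hKL hxK, hxp⟩

theorem stmt3_general {N : ℕ} (𝒦 : Set (Set (Fin N → ℂ)))
    (hcomp : ∀ K ∈ 𝒦, IsCompact K) (hchain : IsChain (· ⊆ ·) 𝒦) :
    rationalHull (⋂₀ 𝒦) = ⋂ K ∈ 𝒦, rationalHull K := by
  refine subset_antisymm (subset_iInter₂ fun K hK => rationalHull_mono (sInter_subset_of_mem hK))
    fun z hz p hp => ?_
  have hzero : IsClosed {x | eval x p = 0} := isClosed_eq (continuous_eval p) continuous_const
  exact hchain.nonempty_sInter_inter_of_isClosed hcomp hzero ⟨z, hp⟩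
    fun K hK => mem_iInter₂.1 hz K hK p hp

theorem stmt3 {N : ℕ} (𝒦 : Set (Set (Fin N → ℂ))) (hne : 𝒦.Nonempty)
    (hcomp : ∀ K ∈ 𝒦, IsCompact K) (hchain : IsChain (· ⊆ ·) 𝒦) :
    rationalHull (⋂₀ 𝒦) = ⋂ K ∈ 𝒦, rationalHull K :=
  stmt3_general 𝒦 hcomp hchain
end

section
/- Let X ⊆ ℂ^N be compact and let E be the largest perfect subset of X. Then (polynomial hull of E) \ E contains (polynomial hull of X) \ X. -/
open MvPolynomial

/-! If `z ∉ X` lies in the hull of `X`, Zorn's lemma gives a minimal compact `S ⊆ X` whose hull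
still contains `z`. Such an `S` has no isolated point: an isolated point `x ≠ z` can be removed
without losing `z` from the hull, by testing against `p ^ n * q` with `q z = 1`, `q x = 0` and
letting `n → ∞`. So `S` is perfect, hence `S ⊆ E`, and `z` lies in the hull of `E`. -/

lemma le_of_forall_pow_le_mul_pow {s t M : ℝ} (hs : 0 ≤ s) (h : ∀ n : ℕ, t ^ n ≤ M * s ^ n) :
    t ≤ s := by
  by_contra! hst
  rcases hs.eq_or_lt with rfl | hs
  · have := h 1
    simp only [pow_one, mul_zero] at this
    linarith
  obtain ⟨n, hn⟩ := pow_unbounded_of_one_lt M ((one_lt_div hs).mpr hst)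
  have : (t / s) ^ n ≤ M := by
    rw [div_pow, div_le_iff₀ (by positivity)]
    exact h n
  linarith

section PolyHull

variable {N : ℕ} {K L : Set (Fin N → ℂ)} {z : Fin N → ℂ}

lemma bddAbove_norm_eval_image (hK : Bornology.IsBounded K) (p : MvPolynomial (Fin N) ℂ) :
    BddAbove ((fun x => ‖eval x p‖) '' K) :=
  ((hK.isCompact_closure.image (continuous_eval p).norm).bddAbove).mono
    (Set.image_mono subset_closure)

lemma mem_polyHull_iff (hK : Bornology.IsBounded K) :
    z ∈ polyHull K ↔
      ∀ (p : MvPolynomial (Fin N) ℂ) (r : ℝ), (∀ x ∈ K, ‖eval x p‖ ≤ r) → ‖eval z p‖ ≤ r := by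
  refine ⟨fun hz p r hr => ?_, fun h p => h p _ fun x hx =>
    le_csSup (bddAbove_norm_eval_image hK p) ⟨x, hx, rfl⟩⟩
  rcases K.eq_empty_or_nonempty with rfl | hne
  · exact absurd (hz 1) (by simp)
  · exact (hz p).trans (csSup_le (hne.image _) (Set.forall_mem_image.mpr hr))

lemma polyHull_mono (hL : Bornology.IsBounded L) (hKL : K ⊆ L) : polyHull K ⊆ polyHull L := by
  intro z hz
  rw [mem_polyHull_iff hL]
  exact fun p r hr => (mem_polyHull_iff (hL.subset hKL)).mp hz p r fun x hx => hr x (hKL hx)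

lemma exists_eval_eq_one_eval_eq_zero {a z : Fin N → ℂ} (hza : z ≠ a) :
    ∃ q : MvPolynomial (Fin N) ℂ, eval z q = 1 ∧ eval a q = 0 := by
  obtain ⟨i, hi⟩ := Function.ne_iff.mp hza
  refine ⟨C (z i - a i)⁻¹ * (X i - C (a i)), ?_, by simp⟩
  simp [inv_mul_cancel₀ (sub_ne_zero.mpr hi)]

lemma mem_polyHull_of_mem_polyHull_insert (hK : Bornology.IsBounded K) {a : Fin N → ℂ}
    (hz : z ∈ polyHull (insert a K)) (hza : z ≠ a) : z ∈ polyHull K := by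
  obtain ⟨q, hqz, hqa⟩ := exists_eval_eq_one_eval_eq_zero hza
  obtain ⟨M, hM⟩ := bddAbove_norm_eval_image hK q
  intro p
  set s := sSup ((fun x => ‖eval x p‖) '' K)
  have hs : ∀ x ∈ K, ‖eval x p‖ ≤ s := fun x hx =>
    le_csSup (bddAbove_norm_eval_image hK p) ⟨x, hx, rfl⟩
  have hs0 : 0 ≤ s := Real.sSup_nonneg (Set.forall_mem_image.mpr fun _ _ => norm_nonneg _)
  refine le_of_forall_pow_le_mul_pow (M := max M 0) hs0 fun n => ?_
  have hz' := (mem_polyHull_iff (hK.insert a)).mp hz (p ^ n * q) (max M 0 * s ^ n)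
  simp only [map_mul, map_pow, hqz, mul_one, norm_pow] at hz'
  refine hz' fun x hx => ?_
  rcases hx with rfl | hx
  · simp only [hqa, mul_zero, norm_zero]; positivity
  · rw [norm_mul, norm_pow, mul_comm]
    exact mul_le_mul ((hM ⟨x, hx, rfl⟩).trans (le_max_left _ _))
      (pow_le_pow_left₀ (norm_nonneg _) (hs x hx) n) (by positivity) (le_max_right _ _)

lemma mem_polyHull_sInter {c : Set (Set (Fin N → ℂ))} (hc : DirectedOn (· ⊇ ·) c)
    (hne : c.Nonempty) (hcomp : ∀ K ∈ c, IsCompact K) (hz : ∀ K ∈ c, z ∈ polyHull K) :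
    z ∈ polyHull (⋂₀ c) := by
  obtain ⟨K₀, hK₀⟩ := hne
  have : Nonempty c := ⟨⟨K₀, hK₀⟩⟩
  rw [mem_polyHull_iff ((hcomp K₀ hK₀).isBounded.subset (Set.sInter_subset_of_mem hK₀))]
  intro p r hr
  refine le_of_forall_pos_le_add fun ε hε => ?_
  have hU : IsOpen {x | ‖eval x p‖ < r + ε} :=
    isOpen_lt (continuous_eval p).norm continuous_const
  obtain ⟨⟨K, hK⟩, hKU⟩ := exists_subset_nhds_of_isCompact' (directedOn_iff_directed.mp hc)
    (fun K => hcomp K K.2) (fun K => (hcomp K K.2).isClosed) (U := {x | ‖eval x p‖ < r + ε})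
    fun x hx => hU.mem_nhds <| (hr x (by simpa [Set.sInter_eq_iInter] using hx)).trans_lt
      (by linarith)
  exact (mem_polyHull_iff (hcomp K hK).isBounded).mp (hz K hK) p _ fun x hx => (hKU hx).le

end PolyHull

lemma isCompact_diff_singleton_of_not_accPt {α : Type*} [TopologicalSpace α] {S : Set α}
    {x : α} (hS : IsCompact S) (hx : ¬AccPt x (Filter.principal S)) : IsCompact (S \ {x}) := by
  rw [accPt_iff_nhds] at hx
  push Not at hx
  obtain ⟨U, hU, hUS⟩ := hx
  convert hS.diff (isOpen_interior (s := U)) using 1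
  ext y
  refine ⟨fun ⟨hyS, hyx⟩ => ⟨hyS, fun hyU => hyx (hUS y ⟨interior_subset hyU, hyS⟩)⟩, ?_⟩
  rintro ⟨hyS, hyU⟩
  exact ⟨hyS, fun hyx => hyU (hyx ▸ mem_interior_iff_mem_nhds.mpr hU)⟩

section Minimal

variable {N : ℕ} {X : Set (Fin N → ℂ)} {z : Fin N → ℂ}

lemma exists_minimal_isCompact_mem_polyHull (hX : IsCompact X) (hz : z ∈ polyHull X) :
    ∃ S, Minimal (fun K => IsCompact K ∧ K ⊆ X ∧ z ∈ polyHull K) S := by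
  have hchain : ∀ c ⊆ {K | IsCompact K ∧ K ⊆ X ∧ z ∈ polyHull K}, IsChain (· ⊆ ·) c →
      c.Nonempty → ∃ T ∈ {K | IsCompact K ∧ K ⊆ X ∧ z ∈ polyHull K}, ∀ K ∈ c, T ⊆ K := by
    rintro c hc hc_chain ⟨K, hK⟩
    have hc_dir : IsChain (· ⊇ ·) c := hc_chain.symm
    refine ⟨⋂₀ c, ⟨?_, ?_, ?_⟩, fun L hL => Set.sInter_subset_of_mem hL⟩
    · exact (hc hK).1.of_isClosed_subset (isClosed_sInter fun L hL => (hc hL).1.isClosed)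
        (Set.sInter_subset_of_mem hK)
    · exact (Set.sInter_subset_of_mem hK).trans (hc hK).2.1
    · exact mem_polyHull_sInter hc_dir.directedOn ⟨K, hK⟩ (fun L hL => (hc hL).1)
        fun L hL => (hc hL).2.2
  obtain ⟨S, -, hS⟩ := zorn_superset_nonempty _ hchain X ⟨hX, subset_rfl, hz⟩
  exact ⟨S, hS⟩

lemma Minimal.perfect_of_isCompact_mem_polyHull {S : Set (Fin N → ℂ)} (hzX : z ∉ X)
    (hS : Minimal (fun K => IsCompact K ∧ K ⊆ X ∧ z ∈ polyHull K) S) : Perfect S := by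
  obtain ⟨⟨hSc, hSX, hzS⟩, hSmin⟩ := hS
  refine ⟨hSc.isClosed, fun x hxS => by_contra fun hx => ?_⟩
  have hzS' : z ∈ polyHull (S \ {x}) := by
    refine mem_polyHull_of_mem_polyHull_insert (hSc.isBounded.subset Set.sdiff_subset) ?_
      (ne_of_mem_of_not_mem (hSX hxS) hzX).symm
    rwa [Set.insert_sdiff_singleton, Set.insert_eq_of_mem hxS]
  exact (hSmin ⟨isCompact_diff_singleton_of_not_accPt hSc hx, Set.sdiff_subset.trans hSX, hzS'⟩
    Set.sdiff_subset hxS).2 rfl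

end Minimal

theorem stmt8_general {N : ℕ} (X E : Set (Fin N → ℂ)) (hX : IsCompact X) (hEX : E ⊆ X)
    (hmax : ∀ F ⊆ X, Perfect F → F ⊆ E) :
    polyHull X \ X ⊆ polyHull E \ E := by
  rintro z ⟨hzX, hznX⟩
  obtain ⟨S, hS⟩ := exists_minimal_isCompact_mem_polyHull hX hzX
  have hSE : S ⊆ E := hmax S hS.prop.2.1 (hS.perfect_of_isCompact_mem_polyHull hznX)
  exact ⟨polyHull_mono (hX.isBounded.subset hEX) hSE hS.prop.2.2, fun hzE => hznX (hEX hzE)⟩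

theorem stmt8 {N : ℕ} (X E : Set (Fin N → ℂ)) (hX : IsCompact X) (hEX : E ⊆ X)
    (hE : Perfect E) (hmax : ∀ F ⊆ X, Perfect F → F ⊆ E) :
    polyHull X \ X ⊆ polyHull E \ E :=
  stmt8_general X E hX hEX hmax
end

section
/- Let X ⊆ ℂ^N be compact and suppose the invertible elements of P(X) are dense in P(X). Then the polynomial hull of X coincides with the rational hull of X. -/
open MvPolynomial

/-! Evaluation at a point `z` of the polynomial hull is bounded by the sup norm on `X`, so it
extends to a character `φ` of `P(X)`. If a polynomial `p` with `p(z) = 0` had no zero on `X`,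
it would be a unit of `C(X)`; approximating it by an invertible `f = g⁻¹` of `P(X)` we would get
`1 = φ(f) φ(g)` with `|φ(f)| = |φ(f - p)| ≤ ‖f - p‖` arbitrarily small while `‖g‖` stays near
`‖p⁻¹‖`, which is absurd. The character is never constructed: the inequality
`1 ≤ ‖u - p‖ ‖v‖ + ‖1 - u v‖`, true for polynomials `u, v`, passes to the closure. -/

theorem one_le_norm_sub_mul_norm_add_norm_one_sub_mul {R A K : Type*} [Ring R]
    [SeminormedRing A] [SeminormedRing K] [NormOneClass K] (ι : R →+* A) (χ : R →+* K)
    (hχ : ∀ q, ‖χ q‖ ≤ ‖ι q‖) {c : R} (hc : χ c = 0) {u v : A}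
    (hu : u ∈ closure (Set.range ι)) (hv : v ∈ closure (Set.range ι)) :
    1 ≤ ‖u - ι c‖ * ‖v‖ + ‖1 - u * v‖ := by
  let S : Set (A × A) := {w | 1 ≤ ‖w.1 - ι c‖ * ‖w.2‖ + ‖1 - w.1 * w.2‖}
  have hS : IsClosed S := isClosed_le continuous_const (by fun_prop)
  have hrange : Set.range ι ×ˢ Set.range ι ⊆ S := by
    rintro ⟨_, _⟩ ⟨⟨P, rfl⟩, ⟨Q, rfl⟩⟩
    calc (1 : ℝ) = ‖χ (P - c) * χ Q + χ (1 - P * Q)‖ := by simp [hc]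
      _ ≤ ‖χ (P - c)‖ * ‖χ Q‖ + ‖χ (1 - P * Q)‖ :=
        (norm_add_le _ _).trans (add_le_add_left (norm_mul_le _ _) _)
      _ ≤ ‖ι (P - c)‖ * ‖ι Q‖ + ‖ι (1 - P * Q)‖ := by
        gcongr <;> exact hχ _
      _ = _ := by simp
  have huv : (u, v) ∈ closure (Set.range ι ×ˢ Set.range ι) := by
    rw [closure_prod_eq]
    exact ⟨hu, hv⟩
  exact hS.closure_subset_iff.2 hrange huv

section Restriction

variable {N : ℕ} (X : Set (Fin N → ℂ))

noncomputable def restrictPoly : MvPolynomial (Fin N) ℂ →+* C(X, ℂ) where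
  toFun q := ⟨fun x => eval (x : Fin N → ℂ) q, q.continuous_eval.comp continuous_subtype_val⟩
  map_one' := by ext; simp
  map_mul' _ _ := by ext; simp
  map_zero' := by ext; simp
  map_add' _ _ := by ext; simp

@[simp]
theorem restrictPoly_apply (q : MvPolynomial (Fin N) ℂ) (x : X) :
    restrictPoly X q x = eval (x : Fin N → ℂ) q :=
  rfl

theorem PX_eq_closure_range_restrictPoly : PX X = closure (Set.range (restrictPoly X)) := by
  unfold PX
  congr 1
  ext f
  exact ⟨fun ⟨p, hp⟩ => ⟨p, ContinuousMap.ext fun x => (hp x).symm⟩,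
    fun ⟨p, hp⟩ => ⟨p, fun x => by rw [← hp, restrictPoly_apply]⟩⟩

variable {X}

theorem norm_eval_le_norm_restrictPoly [CompactSpace X] {z : Fin N → ℂ} (hz : z ∈ polyHull X)
    (q : MvPolynomial (Fin N) ℂ) : ‖eval z q‖ ≤ ‖restrictPoly X q‖ :=
  (hz q).trans <| Real.sSup_le (by
    rintro _ ⟨x, hx, rfl⟩
    exact (restrictPoly X q).norm_coe_le_norm ⟨x, hx⟩) (norm_nonneg _)

end Restriction

theorem rationalHull_subset_polyHull {N : ℕ} {X : Set (Fin N → ℂ)} (hX : IsCompact X) :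
    rationalHull X ⊆ polyHull X := by
  intro z hz p
  obtain ⟨x, hxX, hx⟩ := hz (p - C (eval z p)) (by simp)
  rw [map_sub, eval_C, sub_eq_zero] at hx
  rw [← hx]
  exact le_csSup (hX.image p.continuous_eval.norm).bddAbove ⟨x, hxX, rfl⟩

theorem polyHull_subset_rationalHull {N : ℕ} {X : Set (Fin N → ℂ)} (hX : IsCompact X)
    (hdense : PX X ⊆ closure {f ∈ PX X | ∃ g ∈ PX X, ∀ x, f x * g x = 1}) :
    polyHull X ⊆ rationalHull X := by
  have : CompactSpace X := isCompact_iff_compactSpace.mp hX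
  intro z hz p hpz
  by_contra! hne
  set ι := restrictPoly X
  have hunit : IsUnit (ι p) :=
    (ContinuousMap.isUnit_iff_forall_ne_zero _).2 fun x => hne x x.2
  let F : C(X, ℂ) → ℝ := fun u => ‖u - ι p‖ * ‖Ring.inverse u‖
  have hF : ContinuousAt F (ι p) :=
    (continuousAt_id.sub continuousAt_const).norm.mul
      (NormedRing.inverse_continuousAt hunit.unit).norm
  have hFp : F (ι p) = 0 := by simp [F]
  have hsmall : ∀ᶠ u in nhds (ι p), F u < 1 :=
    hF.eventually (gt_mem_nhds (hFp ▸ one_pos))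
  have hιp : ι p ∈ PX X := by
    rw [PX_eq_closure_range_restrictPoly]
    exact subset_closure ⟨p, rfl⟩
  obtain ⟨f, hFf, hfPX, g, hgPX, hfg⟩ := mem_closure_iff_nhds.1 (hdense hιp) _ hsmall
  have hfg' : f * g = 1 := ContinuousMap.ext hfg
  have hinv : Ring.inverse f = g := Ring.inverse_unit ⟨f, g, hfg', (mul_comm g f).trans hfg'⟩
  rw [PX_eq_closure_range_restrictPoly] at hfPX hgPX
  have key := one_le_norm_sub_mul_norm_add_norm_one_sub_mul ι (eval z)
    (norm_eval_le_norm_restrictPoly hz) hpz hfPX hgPX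
  have hlt : ‖f - ι p‖ * ‖g‖ < 1 := hinv ▸ hFf
  rw [hfg', sub_self, norm_zero, add_zero] at key
  linarith

theorem stmt10 {N : ℕ} (X : Set (Fin N → ℂ)) (hX : IsCompact X)
    (hdense : PX X ⊆ closure {f ∈ PX X | ∃ g ∈ PX X, ∀ x, f x * g x = 1}) :
    polyHull X = rationalHull X :=
  (polyHull_subset_rationalHull hX hdense).antisymm (rationalHull_subset_polyHull hX)
end

section
/- Let X ⊆ ℂ^N be compact, and suppose x₀ ∈ ĥ(X) and there is a sequence of polynomials f_j with Re f_j ≤ 0 on ĥ(X), f_j(x₀) = -1 for all j, and such that for every x ∈ ĥ(X) \ {x₀} there are infinitely many j with Re f_j(x) > -1/j. Then {x₀} is a one-point Gleason part for P(X); that is, no x ∈ ĥ(X) \ {x₀} lies in the same Gleason part as x₀. -/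
open MvPolynomial

theorem stmt11 {N : ℕ} (X : Set (Fin N → ℂ)) (hX : IsCompact X)
    (x₀ : Fin N → ℂ) (hx₀ : x₀ ∈ polyHull X)
    (f : ℕ → MvPolynomial (Fin N) ℂ)
    (hneg : ∀ j, ∀ z ∈ polyHull X, (eval z (f j)).re ≤ 0)
    (hval : ∀ j, eval x₀ (f j) = -1)
    (hfreq : ∀ x ∈ polyHull X, x ≠ x₀ →
      ∃ᶠ j in Filter.atTop, (eval x (f j)).re > -1 / (j : ℝ)) :
    ∀ x ∈ polyHull X, x ≠ x₀ → ¬ SameGleasonPart (polyHull X) x x₀ := by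
  intro x hx hne ⟨c, hc, hcond⟩
  obtain ⟨j, hj, hgt⟩ := ((hfreq x hx hne).and_eventually
    (Filter.eventually_ge_atTop (⌈c⌉₊ + 1))).exists
  have h2 := (hcond (f j) (hneg j)).2
  rw [hval j] at h2
  simp only [Complex.neg_re, Complex.one_re] at h2
  have hc0 : (0:ℝ) < c := lt_of_lt_of_le one_pos hc
  have hcj : c ≤ (j : ℝ) := by
    calc c ≤ (⌈c⌉₊ : ℝ) := Nat.le_ceil c
    _ ≤ (j : ℝ) := by exact_mod_cast le_trans (Nat.le_succ _) hgt
  have hj0 : (0:ℝ) < j := hc0.trans_le hcj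
  have h1 : c * (-1 / (j:ℝ)) < c * (eval x (f j)).re :=
    mul_lt_mul_of_pos_left hj hc0
  have h3 : -1 ≤ c * (-1 / (j:ℝ)) := by
    rw [mul_div_assoc', mul_neg_one, neg_div, neg_le_neg_iff]
    exact (div_le_one hj0).mpr hcj
  linarith
end

section
/- If K and C are disjoint compact polynomially convex subsets of ℂ^N whose union K ∪ C is polynomially convex, and x₀ ∉ K ∪ C, then there exists a polynomial f on ℂ^N with f(x₀) = -1 and Re f > 0 on K ∪ C. -/
open MvPolynomial

theorem stmt13 {N : ℕ} (K C : Set (Fin N → ℂ)) (x₀ : Fin N → ℂ)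
    (hKc : IsCompact K) (hCc : IsCompact C) (hKpc : IsPolyConvex K)
    (hCpc : IsPolyConvex C) (hdisj : Disjoint K C) (hU : IsPolyConvex (K ∪ C))
    (hx₀ : x₀ ∉ K ∪ C) :
    ∃ f : MvPolynomial (Fin N) ℂ, eval x₀ f = -1 ∧ ∀ z ∈ K ∪ C, 0 < (eval z f).re := by
  have hx : x₀ ∉ polyHull (K ∪ C) := by rw [hU]; exact hx₀
  simp only [polyHull, Set.mem_setOf_eq, not_forall, not_le] at hx
  obtain ⟨p, hp⟩ := hx
  set M := sSup ((fun x => ‖eval x p‖) '' (K ∪ C)) with hM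
  have hM0 : 0 ≤ M := Real.sSup_nonneg (by rintro _ ⟨x, _, rfl⟩; exact norm_nonneg _)
  have hpx : 0 < ‖eval x₀ p‖ := lt_of_le_of_lt hM0 hp
  have hpx0 : eval x₀ p ≠ 0 := by simpa using hpx.ne'
  set r : ℝ := M / ‖eval x₀ p‖ with hr
  have hr0 : 0 ≤ r := div_nonneg hM0 hpx.le
  have hr1 : r < 1 := (div_lt_one hpx).mpr hp
  obtain ⟨m, hm⟩ := exists_pow_lt_of_lt_one (by norm_num : (0:ℝ) < 1/2) hr1
  set q : MvPolynomial (Fin N) ℂ := MvPolynomial.C (eval x₀ p)⁻¹ * p with hq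
  have hqx : eval x₀ q = 1 := by
    simp [hq, inv_mul_cancel₀ hpx0]
  have hbdd : BddAbove ((fun x => ‖eval x p‖) '' (K ∪ C)) :=
    ((hKc.union hCc).image (by continuity : Continuous fun x => ‖eval x p‖)).bddAbove
  have hqz : ∀ z ∈ K ∪ C, ‖eval z q‖ ≤ r := by
    intro z hz
    have h1 : ‖eval z p‖ ≤ M := le_csSup hbdd ⟨z, hz, rfl⟩
    have : ‖eval z q‖ = ‖eval z p‖ / ‖eval x₀ p‖ := by
      simp [hq, norm_inv, div_eq_inv_mul]
    rw [this, hr]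
    gcongr
  refine ⟨1 - MvPolynomial.C 2 * q ^ m, ?_, ?_⟩
  · simp [hqx]
    norm_num
  · intro z hz
    have h1 : ‖eval z q‖ ^ m ≤ r ^ m := pow_le_pow_left₀ (norm_nonneg _) (hqz z hz) m
    have h2 : ((eval z q) ^ m).re ≤ ‖(eval z q) ^ m‖ := Complex.re_le_norm _
    rw [norm_pow] at h2
    have h3 : ((eval z q) ^ m).re < 1 / 2 := lt_of_le_of_lt (h2.trans h1) hm
    simp only [map_sub, map_mul, map_one, map_pow, MvPolynomial.eval_C]
    simp only [Complex.sub_re, Complex.one_re, Complex.mul_re]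
    norm_num
    linarith
end

section
/- (Kallin's lemma, half-plane version) Let K and L be compact polynomially convex subsets of ℂ^N, and suppose there is a polynomial f such that f(K) is contained in {Re w ≥ 0} and f(L) is contained in {Re w ≤ -δ} for some δ > 0. Then K ∪ L is polynomially convex. -/
open MvPolynomial

/-!
Shift `f` by a constant to a polynomial `g` that maps `K` and `L` into the two halves of
`S = {w | d ≤ |Re w|, |Re w| ≤ R, |Im w| ≤ R}`, and sends a given point `z` of the hull of
`K ∪ L` to the half containing `g(K)`, say. As `ℂ \ S` is connected, the coordinate function has
spectrum `S` in the uniform closure `A` of the polynomials in `C(S, ℂ)`, so by spectral mapping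
every polynomial without zeros on `S` is invertible in `A`. Hence `(1 + w)^N / ((1 + w)^N +
(1 - w)^N)`, which is close to `1` on the right half of `S` and to `0` on the left half for large
`N`, is a uniform limit of polynomials `q` on `S` (Runge's theorem for this `S`). Testing the hull
of `K ∪ L` against `p * (q ∘ g)` then gives `|p(z)| ≤ sup_K |p|`, so `z` lies in the hull of `K`,
which is `K`.
-/

section

open Polynomial

theorem exists_mul_eq_one_mem_closure_polynomialFunctions {S : Set ℂ} [CompactSpace S]
    (hS : IsPreconnected Sᶜ) {P : ℂ[X]} (hP : ∀ w ∈ S, P.eval w ≠ 0) :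
    ∃ g ∈ (polynomialFunctions S).topologicalClosure, ∀ w : S, P.eval (w : ℂ) * g w = 1 := by
  set A := (polynomialFunctions S).topologicalClosure
  have : IsClosed (A : Set C(S, ℂ)) := (polynomialFunctions S).isClosed_topologicalClosure
  have : CompleteSpace A := this.completeSpace_coe
  let x : A := ⟨Polynomial.X.toContinuousMapOn S,
    (polynomialFunctions S).le_topologicalClosure ⟨Polynomial.X, trivial, rfl⟩⟩
  have hx : spectrum ℂ x = S := by
    have hrange : spectrum ℂ (x : C(S, ℂ)) = S := by
      rw [ContinuousMap.spectrum_eq_range]; ext w; simp [x]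
    rw [Subalgebra.spectrum_eq_of_isPreconnected_compl A x (hrange.symm ▸ hS), hrange]
  rcases S.eq_empty_or_nonempty with hempty | hne
  · exact ⟨0, A.zero_mem, fun w => absurd w.2 (by simp [hempty])⟩
  have hunit : IsUnit (aeval x P) := by
    rw [← spectrum.zero_notMem_iff ℂ,
      spectrum.map_polynomial_aeval_of_nonempty x P (hx.symm ▸ hne), hx]
    rintro ⟨w, hw, h⟩
    exact hP w hw h
  obtain ⟨g, hg⟩ := hunit.exists_right_inv
  refine ⟨g, g.2, fun w => ?_⟩
  simpa [← aeval_algHom_apply A.val, x] using congrArg (fun a : A => (a : C(S, ℂ)) w) hg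

theorem exists_polynomial_approx_div {S : Set ℂ} (hS : IsCompact S) (hSc : IsPreconnected Sᶜ)
    {P : ℂ[X]} (hP : ∀ w ∈ S, P.eval w ≠ 0) (Q : ℂ[X]) {ε : ℝ} (hε : 0 < ε) :
    ∃ q : ℂ[X], ∀ w ∈ S, ‖q.eval w - Q.eval w / P.eval w‖ < ε := by
  have : CompactSpace S := isCompact_iff_compactSpace.mp hS
  obtain ⟨g, hg, hPg⟩ := exists_mul_eq_one_mem_closure_polynomialFunctions hSc hP
  have hQg : Q.toContinuousMapOn S * g ∈ (polynomialFunctions S).topologicalClosure :=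
    mul_mem ((polynomialFunctions S).le_topologicalClosure ⟨Q, trivial, rfl⟩) hg
  rw [← SetLike.mem_coe, Subalgebra.topologicalClosure_coe] at hQg
  obtain ⟨_, ⟨q, -, rfl⟩, hq⟩ := Metric.mem_closure_iff.mp hQg ε hε
  refine ⟨q, fun w hw => ?_⟩
  have hgw : g ⟨w, hw⟩ = (P.eval w)⁻¹ := eq_inv_of_mul_eq_one_right (hPg ⟨w, hw⟩)
  have := (ContinuousMap.dist_apply_le_dist ⟨w, hw⟩).trans_lt hq
  simpa [dist_eq_norm', hgw, div_eq_mul_inv] using this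

theorem norm_one_sub_lt_norm_one_add {w : ℂ} (hw : 0 < w.re) : ‖1 - w‖ < ‖1 + w‖ := by
  rw [← sq_lt_sq₀ (norm_nonneg _) (norm_nonneg _), Complex.sq_norm, Complex.sq_norm,
    Complex.normSq_apply, Complex.normSq_apply]
  simp only [Complex.sub_re, Complex.add_re, Complex.sub_im, Complex.add_im, Complex.one_re,
    Complex.one_im]
  nlinarith

theorem exists_lt_one_forall_norm_one_sub_le {T : Set ℂ} (hT : IsCompact T)
    (hre : ∀ w ∈ T, 0 < w.re) :
    ∃ ρ < 1, ∀ w ∈ T, ‖1 - w‖ ≤ ρ * ‖1 + w‖ := by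
  rcases T.eq_empty_or_nonempty with rfl | hne
  · exact ⟨0, one_pos, by simp⟩
  have hpos : ∀ w ∈ T, 0 < ‖1 + w‖ := fun w hw =>
    (norm_nonneg _).trans_lt (norm_one_sub_lt_norm_one_add (hre w hw))
  obtain ⟨w₀, hw₀, hmax⟩ := hT.exists_isMaxOn hne
    (f := fun w => ‖1 - w‖ / ‖1 + w‖) <| by
      exact ContinuousOn.div (by fun_prop) (by fun_prop) fun w hw => (hpos w hw).ne'
  refine ⟨‖1 - w₀‖ / ‖1 + w₀‖,
    (div_lt_one (hpos w₀ hw₀)).2 (norm_one_sub_lt_norm_one_add (hre w₀ hw₀)),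
    fun w hw => (div_le_iff₀ (hpos w hw)).1 (hmax hw)⟩

theorem add_ne_zero_and_norm_div_add_le {𝕜 : Type*} [NormedField 𝕜] {a b : 𝕜} {t : ℝ}
    (ha : a ≠ 0) (ht : t ≤ 1 / 2) (hb : ‖b‖ ≤ t * ‖a‖) : a + b ≠ 0 ∧ ‖b / (a + b)‖ ≤ 2 * t := by
  have ha' : 0 < ‖a‖ := norm_pos_iff.mpr ha
  have hab : ‖a‖ / 2 ≤ ‖a + b‖ := by
    have := norm_sub_norm_le a (-b)
    rw [norm_neg, sub_neg_eq_add] at this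
    nlinarith
  refine ⟨norm_pos_iff.mp (by linarith), ?_⟩
  have ht0 : 0 ≤ t := nonneg_of_mul_nonneg_left ((norm_nonneg b).trans hb) ha'
  rw [norm_div, div_le_iff₀ (by linarith)]
  nlinarith [mul_le_mul_of_nonneg_left hab ht0]

theorem norm_one_sub_pow_div_le {w : ℂ} {ρ : ℝ} {N : ℕ} (hw : 0 < w.re) (hN : ρ ^ N ≤ 1 / 2)
    (hρ : ‖1 - w‖ ≤ ρ * ‖1 + w‖) :
    (1 + w) ^ N + (1 - w) ^ N ≠ 0 ∧
      ‖(1 - w) ^ N / ((1 + w) ^ N + (1 - w) ^ N)‖ ≤ 2 * ρ ^ N := by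
  have h1w : 1 + w ≠ 0 :=
    norm_pos_iff.mp ((norm_nonneg _).trans_lt (norm_one_sub_lt_norm_one_add hw))
  refine add_ne_zero_and_norm_div_add_le (pow_ne_zero _ h1w) hN ?_
  rw [norm_pow, norm_pow, ← mul_pow]
  exact pow_le_pow_left₀ (norm_nonneg _) hρ N

theorem exists_pow_forall_norm_div_add_pow_le {S : Set ℂ} (hS : IsCompact S)
    (hre : ∀ w ∈ S, w.re ≠ 0) {ε : ℝ} (hε : 0 < ε) :
    ∃ N : ℕ, ∀ w ∈ S, (1 + w) ^ N + (1 - w) ^ N ≠ 0 ∧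
      (0 < w.re → ‖(1 + w) ^ N / ((1 + w) ^ N + (1 - w) ^ N) - 1‖ ≤ ε) ∧
      (w.re < 0 → ‖(1 + w) ^ N / ((1 + w) ^ N + (1 - w) ^ N)‖ ≤ ε) := by
  have hclosed : IsClosed {w : ℂ | 0 ≤ w.re} := isClosed_le continuous_const Complex.continuous_re
  obtain ⟨ρ₁, hρ₁1, hρ₁⟩ := exists_lt_one_forall_norm_one_sub_le
    (hS.inter_right hclosed) fun w hw => (hw.2 : 0 ≤ w.re).lt_of_ne (hre w hw.1).symm
  obtain ⟨ρ₂, hρ₂1, hρ₂⟩ := exists_lt_one_forall_norm_one_sub_le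
    (hS.neg.inter_right hclosed) fun w hw => (hw.2 : 0 ≤ w.re).lt_of_ne <| by
      simpa [eq_comm] using hre (-w) (Set.mem_neg.mp hw.1)
  obtain ⟨N, hN⟩ := exists_pow_lt_of_lt_one (show 0 < min (ε / 2) (1 / 2) by positivity)
    (max_lt hρ₁1 hρ₂1)
  have hN₁ : max ρ₁ ρ₂ ^ N ≤ 1 / 2 := hN.le.trans (min_le_right _ _)
  have hN₂ : 2 * max ρ₁ ρ₂ ^ N ≤ ε := by linarith [min_le_left (ε / 2) (1 / 2)]
  refine ⟨N, fun w hw => ?_⟩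
  rcases (hre w hw).lt_or_gt with hw0 | hw0
  · obtain ⟨hne, hbound⟩ := norm_one_sub_pow_div_le (w := -w) (by simpa using hw0) hN₁ <| by
      simpa [← sub_eq_add_neg] using (hρ₂ (-w) ⟨by simpa using hw, by simpa using hw0.le⟩).trans
        (mul_le_mul_of_nonneg_right (le_max_right _ _) (norm_nonneg _))
    simp only [sub_neg_eq_add, ← sub_eq_add_neg, add_comm ((1 - w) ^ N)] at hne hbound
    exact ⟨hne, fun h => absurd h hw0.not_gt, fun _ => hbound.trans hN₂⟩
  · obtain ⟨hne, hbound⟩ := norm_one_sub_pow_div_le hw0 hN₁ <|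
      (hρ₁ w ⟨hw, hw0.le⟩).trans (mul_le_mul_of_nonneg_right (le_max_left _ _) (norm_nonneg _))
    refine ⟨hne, fun _ => ?_, fun h => absurd h hw0.not_gt⟩
    have hdiff : (1 + w) ^ N / ((1 + w) ^ N + (1 - w) ^ N) - 1 =
        -((1 - w) ^ N / ((1 + w) ^ N + (1 - w) ^ N)) := by
      field_simp; ring
    rw [hdiff, norm_neg]
    exact hbound.trans hN₂

theorem exists_polynomial_approx_one_of_re_pos_zero_of_re_neg {S : Set ℂ} (hS : IsCompact S)
    (hSc : IsPreconnected Sᶜ) (hre : ∀ w ∈ S, w.re ≠ 0) {ε : ℝ} (hε : 0 < ε) :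
    ∃ q : ℂ[X], (∀ w ∈ S, 0 < w.re → ‖q.eval w - 1‖ < ε) ∧
      (∀ w ∈ S, w.re < 0 → ‖q.eval w‖ < ε) := by
  obtain ⟨N, hN⟩ := exists_pow_forall_norm_div_add_pow_le hS hre (half_pos hε)
  obtain ⟨q, hq⟩ := exists_polynomial_approx_div hS hSc
    (P := (1 + Polynomial.X) ^ N + (1 - Polynomial.X) ^ N)
    (fun w hw => by simpa using (hN w hw).1) ((1 + Polynomial.X) ^ N) (half_pos hε)
  simp only [Polynomial.eval_add, Polynomial.eval_pow, Polynomial.eval_sub, Polynomial.eval_one,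
    Polynomial.eval_X] at hq
  refine ⟨q, fun w hw hw0 => ?_, fun w hw hw0 => ?_⟩
  · calc ‖q.eval w - 1‖
        ≤ ‖q.eval w - (1 + w) ^ N / ((1 + w) ^ N + (1 - w) ^ N)‖ +
          ‖(1 + w) ^ N / ((1 + w) ^ N + (1 - w) ^ N) - 1‖ := norm_sub_le_norm_sub_add_norm_sub _ _ _
      _ < ε / 2 + ε / 2 := add_lt_add_of_lt_of_le (hq w hw) ((hN w hw).2.1 hw0)
      _ = ε := add_halves ε
  · calc ‖q.eval w‖
        ≤ ‖(1 + w) ^ N / ((1 + w) ^ N + (1 - w) ^ N)‖ +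
          ‖q.eval w - (1 + w) ^ N / ((1 + w) ^ N + (1 - w) ^ N)‖ := norm_le_norm_add_norm_sub' _ _
      _ < ε / 2 + ε / 2 := add_lt_add_of_le_of_lt ((hN w hw).2.2 hw0) (hq w hw)
      _ = ε := add_halves ε

def pairOfRectangles (d R : ℝ) : Set ℂ := {w | d ≤ |w.re| ∧ |w.re| ≤ R ∧ |w.im| ≤ R}

theorem isCompact_pairOfRectangles (d R : ℝ) : IsCompact (pairOfRectangles d R) := by
  refine Metric.isCompact_of_isClosed_isBounded ?_ ?_
  · have hre : Continuous fun w : ℂ => |w.re| := by fun_prop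
    have him : Continuous fun w : ℂ => |w.im| := by fun_prop
    exact (isClosed_le continuous_const hre).inter
      ((isClosed_le hre continuous_const).inter (isClosed_le him continuous_const))
  · refine (Metric.isBounded_iff_subset_closedBall 0).mpr ⟨R + R, fun w hw => ?_⟩
    rw [mem_closedBall_zero_iff]
    exact (Complex.norm_le_abs_re_add_abs_im w).trans (add_le_add hw.2.1 hw.2.2)

theorem isPreconnected_compl_pairOfRectangles {d : ℝ} (hd : 0 < d) (R : ℝ) :
    IsPreconnected (pairOfRectangles d R)ᶜ := by
  have hcompl : (pairOfRectangles d R)ᶜ =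
      (({w | -d < w.re} ∩ {w | w.re < d} ∪ {w | R < w.im}) ∪ {w | w.im < -R}) ∪
        {w | R < w.re} ∪ {w | w.re < -R} := by
    ext w
    simp only [pairOfRectangles, Set.mem_compl_iff, Set.mem_union, Set.mem_inter_iff,
      Set.mem_ofPred_eq]
    grind [abs_le, le_abs]
  -- The strip `|Re w| < d` and the four half-planes outside the square are convex, and each
  -- meets one of those before it.
  have hT : R < |R| + 1 := by linarith [le_abs_self R]
  rw [hcompl]
  refine IsPreconnected.union ⟨-(|R| + 1), |R| + 1⟩ (by simp [hT]) (by simp; linarith)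
    (IsPreconnected.union ⟨|R| + 1, |R| + 1⟩ (by simp [hT]) (by simp [hT])
      (IsPreconnected.union ⟨0, -(|R| + 1)⟩ (by simp [hd]) (by simp [hT])
        (IsPreconnected.union ⟨0, |R| + 1⟩ (by simp [hd]) (by simp [hT])
          ((convex_halfSpace_re_gt _).inter (convex_halfSpace_re_lt _)).isPreconnected
          (convex_halfSpace_im_gt _).isPreconnected)
        (convex_halfSpace_im_lt _).isPreconnected)
      (convex_halfSpace_re_gt _).isPreconnected)
    (convex_halfSpace_re_lt _).isPreconnected

end

section

open Filter Topology

variable {N : ℕ}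

theorem norm_eval_le_sSup {K : Set (Fin N → ℂ)} (hK : IsCompact K) (p : MvPolynomial (Fin N) ℂ)
    {x : Fin N → ℂ} (hx : x ∈ K) : ‖eval x p‖ ≤ sSup ((fun x => ‖eval x p‖) '' K) :=
  le_csSup (hK.bddAbove_image (MvPolynomial.continuous_eval p).norm.continuousOn) ⟨x, hx, rfl⟩

theorem subset_polyHull {K : Set (Fin N → ℂ)} (hK : IsCompact K) : K ⊆ polyHull K :=
  fun _ hx p => norm_eval_le_sSup hK p hx

theorem mem_polyHull_of_forall_approx {K L : Set (Fin N → ℂ)} (hK : IsCompact K)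
    (hL : IsCompact L) {z : Fin N → ℂ} (hz : z ∈ polyHull (K ∪ L))
    (hF : ∀ ε > 0, ∃ F : MvPolynomial (Fin N) ℂ, (∀ x ∈ K, ‖eval x F - 1‖ < ε) ∧
      (∀ x ∈ L, ‖eval x F‖ < ε) ∧ ‖eval z F - 1‖ < ε) :
    z ∈ polyHull K := by
  intro p
  set MK := sSup ((fun x => ‖eval x p‖) '' K)
  set ML := sSup ((fun x => ‖eval x p‖) '' L)
  have hMK : 0 ≤ MK := Real.sSup_nonneg (by rintro _ ⟨x, -, rfl⟩; exact norm_nonneg _)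
  have hML : 0 ≤ ML := Real.sSup_nonneg (by rintro _ ⟨x, -, rfl⟩; exact norm_nonneg _)
  by_contra! hlt
  have hsmall : ∀ᶠ ε in 𝓝[>] (0 : ℝ),
      max (MK * (1 + ε)) (ML * ε) < ‖eval z p‖ * (1 - ε) := by
    have h₁ : Tendsto (fun ε : ℝ => max (MK * (1 + ε)) (ML * ε)) (𝓝 0) (𝓝 MK) :=
      (by fun_prop : Continuous fun ε : ℝ => max (MK * (1 + ε)) (ML * ε)).tendsto' 0 MK
        (by simp [hMK])
    have h₂ : Tendsto (fun ε : ℝ => ‖eval z p‖ * (1 - ε)) (𝓝 0) (𝓝 ‖eval z p‖) :=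
      (by fun_prop : Continuous fun ε : ℝ => ‖eval z p‖ * (1 - ε)).tendsto' 0 _ (by simp)
    exact (h₁.eventually_lt h₂ hlt).filter_mono nhdsWithin_le_nhds
  obtain ⟨ε, hε, hε0⟩ := (hsmall.and self_mem_nhdsWithin).exists
  obtain ⟨F, hFK, hFL, hFz⟩ := hF ε hε0
  refine hε.not_ge ?_
  have hFz' : 1 - ε ≤ ‖eval z F‖ := by
    linarith [norm_le_norm_add_norm_sub' (1 : ℂ) (eval z F), norm_sub_rev (1 : ℂ) (eval z F),
      norm_one (α := ℂ)]
  calc ‖eval z p‖ * (1 - ε) ≤ ‖eval z (p * F)‖ := by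
        rw [map_mul, norm_mul]; gcongr
    _ ≤ sSup ((fun x => ‖eval x (p * F)‖) '' (K ∪ L)) := hz (p * F)
    _ ≤ max (MK * (1 + ε)) (ML * ε) := by
        refine Real.sSup_le ?_ (le_max_of_le_right (by positivity))
        rintro _ ⟨x, hx | hx, rfl⟩
        · refine le_max_of_le_left ?_
          simp only [map_mul, norm_mul]
          gcongr
          · exact norm_eval_le_sSup hK p hx
          · linarith [norm_le_norm_add_norm_sub' (eval x F) 1, norm_one (α := ℂ), hFK x hx]
        · refine le_max_of_le_right ?_
          simp only [map_mul, norm_mul]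
          exact mul_le_mul (norm_eval_le_sSup hL p hx) (hFL x hx).le (norm_nonneg _) hML

theorem mem_polyHull_of_re_separated {K L : Set (Fin N → ℂ)} (hK : IsCompact K)
    (hL : IsCompact L) {z : Fin N → ℂ} (hz : z ∈ polyHull (K ∪ L)) (g : MvPolynomial (Fin N) ℂ)
    {d : ℝ} (hd : 0 < d) (hgK : ∀ x ∈ K, d ≤ (eval x g).re) (hgL : ∀ x ∈ L, (eval x g).re ≤ -d)
    (hgz : d ≤ (eval z g).re) :
    z ∈ polyHull K := by
  set R := sSup ((fun x => ‖eval x g‖) '' (K ∪ L))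
  have hS : ∀ x, d ≤ |(eval x g).re| → ‖eval x g‖ ≤ R → eval x g ∈ pairOfRectangles d R :=
    fun x h₁ h₂ => ⟨h₁, (Complex.abs_re_le_norm _).trans h₂, (Complex.abs_im_le_norm _).trans h₂⟩
  have hcomp : ∀ (q : Polynomial ℂ) x, eval x (Polynomial.aeval g q) = q.eval (eval x g) := by
    intro q x
    induction q using Polynomial.induction_on <;> simp_all
  refine mem_polyHull_of_forall_approx hK hL hz fun ε hε => ?_
  obtain ⟨q, hqr, hql⟩ := exists_polynomial_approx_one_of_re_pos_zero_of_re_neg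
    (isCompact_pairOfRectangles d R) (isPreconnected_compl_pairOfRectangles hd R)
    (fun w hw => abs_pos.mp (hd.trans_le hw.1)) hε
  refine ⟨Polynomial.aeval g q, fun x hx => ?_, fun x hx => ?_, ?_⟩ <;> rw [hcomp]
  · exact hqr _ (hS x ((hgK x hx).trans (le_abs_self _))
      (norm_eval_le_sSup (hK.union hL) g (Or.inl hx))) (hd.trans_le (hgK x hx))
  · exact hql _ (hS x (le_abs.mpr (Or.inr (le_neg.mpr (hgL x hx))))
      (norm_eval_le_sSup (hK.union hL) g (Or.inr hx))) (by linarith [hgL x hx])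
  · exact hqr _ (hS z (hgz.trans (le_abs_self _)) (hz g)) (hd.trans_le hgz)

end

theorem stmt14 {N : ℕ} (K L : Set (Fin N → ℂ)) (f : MvPolynomial (Fin N) ℂ) (δ : ℝ)
    (hKc : IsCompact K) (hLc : IsCompact L)
    (hKpc : IsPolyConvex K) (hLpc : IsPolyConvex L) (hδ : 0 < δ)
    (hK : ∀ z ∈ K, 0 ≤ (eval z f).re) (hL : ∀ z ∈ L, (eval z f).re ≤ -δ) :
    IsPolyConvex (K ∪ L) := by
  refine subset_antisymm (fun z hz => ?_) (subset_polyHull (hKc.union hLc))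
  rcases le_or_gt (-(δ / 2)) (eval z f).re with hz' | hz'
  · refine Or.inl (hKpc ▸ mem_polyHull_of_re_separated hKc hLc hz (f + C ((3 * δ / 4 : ℝ) : ℂ))
      (d := δ / 4) (by positivity) (fun x hx => ?_) (fun x hx => ?_) ?_)
    all_goals simp only [map_add, eval_C, Complex.add_re, Complex.ofReal_re]
    · linarith [hK x hx]
    · linarith [hL x hx]
    · linarith
  · refine Or.inr (hLpc ▸ mem_polyHull_of_re_separated hLc hKc (Set.union_comm K L ▸ hz)
      (-(f + C ((δ / 4 : ℝ) : ℂ))) (d := δ / 4) (by positivity) (fun x hx => ?_)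
      (fun x hx => ?_) ?_)
    all_goals simp only [map_neg, map_add, eval_C, Complex.neg_re, Complex.add_re,
      Complex.ofReal_re]
    · linarith [hL x hx]
    · linarith [hK x hx]
    · linarith
end
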